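/- arXiv:quant-ph/0506052 — 3 statements merged into one kernel-verified Lean document; each statement's English description precedes it below -/
import Mathlib

section
/- Suppose that for every choice of finite-dimensional complex Hilbert spaces H₁, H₂, H₁', H₂' and every state σ on (H₁⊗H₂) ⊗ (H₁'⊗H₂') the strong superadditivity of entanglement of formation holds: E_f(σ) ≥ E_f(tr_{H₁'⊗H₂'} σ) + E_f(tr_{H₁⊗H₂} σ) (with E_f computed across the 1–2 cuts). Then for every pure state ρ on (H₁⊗H₂) ⊗ (H₁'⊗H₂'), E_m(ρ) ≥ E_m(tr_{H₁'⊗H₂'} ρ) + E_m(tr_{H₁⊗H₂} ρ), with E_m computed across the same cuts. -/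
open Matrix Kronecker BigOperators ComplexOrder

noncomputable section

namespace QAdditivity

/-- von Neumann entropy of a matrix (junk value `0` if not Hermitian):
`S(ρ) = -∑ᵢ λᵢ log λᵢ` over the eigenvalues of `ρ`. -/
def entropy {ι : Type} [Fintype ι] [DecidableEq ι] (ρ : Matrix ι ι ℂ) : ℝ :=
  if h : ρ.IsHermitian then ∑ i, Real.negMulLog (h.eigenvalues i) else 0

/-- A state: positive semidefinite with trace one. -/
def IsState {ι : Type} [Fintype ι] (ρ : Matrix ι ι ℂ) : Prop :=
  ρ.PosSemidef ∧ ρ.trace = 1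

/-- A pure state: rank-one state, i.e. `|φ⟩⟨φ|` for a unit vector `φ`. -/
def IsPureState {ι : Type} [Fintype ι] (ρ : Matrix ι ι ℂ) : Prop :=
  ∃ φ : ι → ℂ, star φ ⬝ᵥ φ = 1 ∧ ρ = vecMulVec φ (star φ)

/-- Partial trace over the second tensor factor. -/
def trRight {ι κ : Type} [Fintype ι] [Fintype κ]
    (ρ : Matrix (ι × κ) (ι × κ) ℂ) : Matrix ι ι ℂ :=
  Matrix.of fun i j => ∑ k, ρ (i, k) (j, k)

/-- Partial trace over the first tensor factor. -/
def trLeft {ι κ : Type} [Fintype ι] [Fintype κ]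
    (ρ : Matrix (ι × κ) (ι × κ) ℂ) : Matrix κ κ ℂ :=
  Matrix.of fun k l => ∑ i, ρ (i, k) (i, l)

/-- Entanglement of a (pure) bipartite state: `E(π) = S(tr_{H₂} π)`. -/
def pureEnt {ι κ : Type} [Fintype ι] [Fintype κ] [DecidableEq ι]
    (π : Matrix (ι × κ) (ι × κ) ℂ) : ℝ :=
  entropy (trRight π)

/-- `E_m(ρ)`: minimum over finite pure-state ensembles for `ρ` of the minimal
entanglement appearing in the ensemble. -/
def Em {ι κ : Type} [Fintype ι] [Fintype κ] [DecidableEq ι]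
    (ρ : Matrix (ι × κ) (ι × κ) ℂ) : ℝ :=
  sInf { e : ℝ | ∃ (n : ℕ) (p : Fin (n + 1) → ℝ)
      (π : Fin (n + 1) → Matrix (ι × κ) (ι × κ) ℂ),
    (∀ i, 0 < p i) ∧ (∀ i, IsPureState (π i)) ∧
    (∑ i, (p i : ℂ) • π i) = ρ ∧
    e = Finset.univ.inf' Finset.univ_nonempty fun i => pureEnt (π i) }

/-- Entanglement of formation `E_f(ρ)`. -/
def Ef {ι κ : Type} [Fintype ι] [Fintype κ] [DecidableEq ι]
    (ρ : Matrix (ι × κ) (ι × κ) ℂ) : ℝ :=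
  sInf { e : ℝ | ∃ (n : ℕ) (p : Fin (n + 1) → ℝ)
      (π : Fin (n + 1) → Matrix (ι × κ) (ι × κ) ℂ),
    (∀ i, 0 < p i) ∧ (∀ i, IsPureState (π i)) ∧
    (∑ i, (p i : ℂ) • π i) = ρ ∧
    e = ∑ i, p i * pureEnt (π i) }

/-- Canonical reordering `(H₁⊗H₂)⊗(H₁'⊗H₂') ≃ (H₁⊗H₁')⊗(H₂⊗H₂')` on matrices. -/
def reorder {a b a' b' : Type}
    (M : Matrix ((a × b) × (a' × b')) ((a × b) × (a' × b')) ℂ) :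
    Matrix ((a × a') × (b × b')) ((a × a') × (b × b')) ℂ :=
  Matrix.reindex (Equiv.prodProdProdComm a b a' b') (Equiv.prodProdProdComm a b a' b') M

/-- Complete positivity of a superoperator. -/
def IsCompletelyPositive {κ η : Type} [Fintype κ] [Fintype η]
    (f : Matrix κ κ ℂ → Matrix η η ℂ) : Prop :=
  ∀ (n : ℕ) (M : Matrix (κ × Fin n) (κ × Fin n) ℂ), M.PosSemidef →
    Matrix.PosSemidef (Matrix.of fun p q : η × Fin n =>
      f (Matrix.of fun a b => M (a, p.2) (b, q.2)) p.1 q.1)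

/-- A quantum channel: a completely positive trace preserving linear map. -/
def IsChannel {κ η : Type} [Fintype κ] [Fintype η]
    (f : Matrix κ κ ℂ → Matrix η η ℂ) : Prop :=
  IsLinearMap ℂ f ∧ IsCompletelyPositive f ∧ ∀ M, (f M).trace = M.trace

/-- Minimum output entropy of a channel. -/
def Smin {κ η : Type} [Fintype κ] [Fintype η] [DecidableEq η]
    (f : Matrix κ κ ℂ → Matrix η η ℂ) : ℝ :=
  sInf { e : ℝ | ∃ ρ : Matrix κ κ ℂ, IsState ρ ∧ e = entropy (f ρ) }

/-- The tensor product `Λ ⊗ Λ'` of two superoperators (defined on all of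
`B(K ⊗ K')` by linearity via matrix units). -/
def tensorChannel {κ η κ' η' : Type} [Fintype κ] [Fintype κ']
    [DecidableEq κ] [DecidableEq κ']
    (f : Matrix κ κ ℂ → Matrix η η ℂ) (g : Matrix κ' κ' ℂ → Matrix η' η' ℂ) :
    Matrix (κ × κ') (κ × κ') ℂ → Matrix (η × η') (η × η') ℂ :=
  fun M => Matrix.of fun p q =>
    ∑ a, ∑ b, ∑ a', ∑ b', M (a, a') (b, b') *
      f (Matrix.single a b 1) p.1 q.1 *
      g (Matrix.single a' b' 1) p.2 q.2

/-- Support of an operator: its range. -/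
def supp {ι : Type} [Fintype ι] (ρ : Matrix ι ι ℂ) : Submodule ℂ (ι → ℂ) :=
  LinearMap.range ρ.mulVecLin

/-! A pure state admits only the trivial pure-state decomposition (every member of it is the
state itself), so `E_m` and `E_f` both equal its entanglement; and `E_m ≤ E_f` for every state,
since a minimum never exceeds an average. Applied to the pure global state and its two
marginals, the strong superadditivity of `E_f` therefore passes to `E_m`. -/

section Entanglement

variable {ι : Type} [Fintype ι]

theorem trace_trRight {κ : Type} [Fintype κ] (ρ : Matrix (ι × κ) (ι × κ) ℂ) :
    (trRight ρ).trace = ρ.trace := by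
  simp [trRight, Matrix.trace, Fintype.sum_prod_type]

theorem trace_trLeft {κ : Type} [Fintype κ] (ρ : Matrix (κ × ι) (κ × ι) ℂ) :
    (trLeft ρ).trace = ρ.trace := by
  rw [Matrix.trace, Matrix.trace, Fintype.sum_prod_type, Finset.sum_comm]
  rfl

theorem trRight_eq_sum_submatrix {κ : Type} [Fintype κ] (ρ : Matrix (ι × κ) (ι × κ) ℂ) :
    trRight ρ = ∑ k, ρ.submatrix (fun i => (i, k)) (fun i => (i, k)) := by
  ext i j
  simp [QAdditivity.trRight, Matrix.sum_apply]

theorem IsState.trRight {κ : Type} [Fintype κ] {ρ : Matrix (ι × κ) (ι × κ) ℂ}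
    (h : IsState ρ) : IsState (trRight ρ) := by
  refine ⟨?_, by rw [trace_trRight, h.2]⟩
  rw [trRight_eq_sum_submatrix]
  exact posSemidef_sum _ fun k _ => h.1.submatrix _

theorem IsState.entropy_nonneg [DecidableEq ι] {ρ : Matrix ι ι ℂ} (h : IsState ρ) :
    0 ≤ entropy ρ := by
  have hsum : ∑ i, h.1.1.eigenvalues i = 1 := by
    simpa using congrArg Complex.re (h.1.1.trace_eq_sum_eigenvalues.symm.trans h.2)
  rw [entropy, dif_pos h.1.1]
  refine Finset.sum_nonneg fun i _ => Real.negMulLog_nonneg (h.1.eigenvalues_nonneg i) ?_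
  rw [← hsum]
  exact Finset.single_le_sum (fun j _ => h.1.eigenvalues_nonneg j) (Finset.mem_univ i)

/-- The values of `F` on the finite pure-state decompositions of `ρ` with positive weights;
`Em ρ` and `Ef ρ` are, definitionally, `sInf` of such sets. -/
def decompositionValues (ρ : Matrix ι ι ℂ)
    (F : (n : ℕ) → (Fin (n + 1) → ℝ) → (Fin (n + 1) → Matrix ι ι ℂ) → ℝ) : Set ℝ :=
  { e : ℝ | ∃ (n : ℕ) (p : Fin (n + 1) → ℝ) (π : Fin (n + 1) → Matrix ι ι ℂ),
    (∀ i, 0 < p i) ∧ (∀ i, IsPureState (π i)) ∧ (∑ i, (p i : ℂ) • π i) = ρ ∧ e = F n p π }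

theorem sInf_decompositionValues_le_sInf {ρ : Matrix ι ι ℂ}
    {F G : (n : ℕ) → (Fin (n + 1) → ℝ) → (Fin (n + 1) → Matrix ι ι ℂ) → ℝ}
    (hF : ∀ n p π, (∀ i, 0 < p i) → (∀ i, IsPureState (π i)) → (∑ i, (p i : ℂ) • π i) = ρ →
      0 ≤ F n p π)
    (hFG : ∀ n p π, (∀ i, 0 < p i) → (∀ i, IsPureState (π i)) → (∑ i, (p i : ℂ) • π i) = ρ →
      F n p π ≤ G n p π) :
    sInf (decompositionValues ρ F) ≤ sInf (decompositionValues ρ G) := by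
  rcases (decompositionValues ρ G).eq_empty_or_nonempty with hG | hG
  · have hF_empty : decompositionValues ρ F = ∅ := by
      refine Set.eq_empty_of_forall_notMem ?_
      rintro _ ⟨n, p, π, hp, hπ, hρ, -⟩
      exact hG.subset ⟨n, p, π, hp, hπ, hρ, rfl⟩
    rw [hF_empty, hG]
  · -- `hF` rules out the junk value `sInf = 0` of a set that is unbounded below.
    have hbdd : BddBelow (decompositionValues ρ F) := by
      refine ⟨0, ?_⟩
      rintro _ ⟨n, p, π, hp, hπ, hρ, rfl⟩
      exact hF n p π hp hπ hρ
    refine le_csInf hG ?_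
    rintro _ ⟨n, p, π, hp, hπ, hρ, rfl⟩
    exact (csInf_le hbdd ⟨n, p, π, hp, hπ, hρ, rfl⟩).trans (hFG n p π hp hπ hρ)

theorem IsPureState.isState {ρ : Matrix ι ι ℂ} (h : IsPureState ρ) : IsState ρ := by
  obtain ⟨φ, hφ, rfl⟩ := h
  refine ⟨posSemidef_vecMulVec_self_star φ, ?_⟩
  rw [trace_vecMulVec, dotProduct_comm, hφ]

theorem IsPureState.reindex {κ : Type} [Fintype κ] {ρ : Matrix ι ι ℂ} (h : IsPureState ρ)
    (e : ι ≃ κ) : IsPureState (Matrix.reindex e e ρ) := by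
  obtain ⟨φ, hφ, rfl⟩ := h
  refine ⟨φ ∘ e.symm, ?_, ?_⟩
  · rw [← hφ]
    exact Fintype.sum_equiv e.symm _ _ fun _ => rfl
  · ext i j
    simp [vecMulVec_apply]

theorem dotProduct_vecMulVec_mulVec (u x : ι → ℂ) :
    star x ⬝ᵥ vecMulVec u (star u) *ᵥ x = star (star u ⬝ᵥ x) * (star u ⬝ᵥ x) := by
  rw [vecMulVec_mulVec, op_smul_eq_smul, dotProduct_smul, smul_eq_mul, mul_comm, star_dotProduct]

theorem sum_weights_eq_one {n : ℕ} {p : Fin (n + 1) → ℝ} {π : Fin (n + 1) → Matrix ι ι ℂ}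
    (hπ : ∀ i, IsPureState (π i)) {ρ : Matrix ι ι ℂ} (hρ : (∑ i, (p i : ℂ) • π i) = ρ)
    (htr : ρ.trace = 1) : ∑ i, p i = 1 := by
  have h := congrArg Matrix.trace hρ
  simp only [trace_sum, trace_smul, (hπ _).isState.2, smul_eq_mul, mul_one, htr] at h
  exact_mod_cast h

theorem dotProduct_eq_zero_of_sum_smul_eq {φ : ι → ℂ} {n : ℕ} {p : Fin (n + 1) → ℝ}
    {ψ : Fin (n + 1) → ι → ℂ} (hp : ∀ i, 0 < p i)
    (hsum : (∑ i, (p i : ℂ) • vecMulVec (ψ i) (star (ψ i))) = vecMulVec φ (star φ))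
    {x : ι → ℂ} (hx : star φ ⬝ᵥ x = 0) (i : Fin (n + 1)) : star (ψ i) ⬝ᵥ x = 0 := by
  have hquad : ∑ j, (p j : ℂ) * (star (star (ψ j) ⬝ᵥ x) * (star (ψ j) ⬝ᵥ x)) = 0 := by
    have h := congrArg (fun M => star x ⬝ᵥ M *ᵥ x) hsum
    simp only [sum_mulVec, dotProduct_sum, smul_mulVec, dotProduct_smul,
      dotProduct_vecMulVec_mulVec, hx, mul_zero, smul_eq_mul] at h
    exact h
  have hterm := (Finset.sum_eq_zero_iff_of_nonneg fun j _ => mul_nonneg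
    (by exact_mod_cast (hp j).le) (star_mul_self_nonneg _)).mp hquad i (Finset.mem_univ i)
  simpa [(hp i).ne'] using hterm

theorem eq_dotProduct_smul_of_forall_orthogonal {φ ψ : ι → ℂ} (hφ : star φ ⬝ᵥ φ = 1)
    (h : ∀ x, star φ ⬝ᵥ x = 0 → star ψ ⬝ᵥ x = 0) : ψ = (star φ ⬝ᵥ ψ) • φ := by
  set x := ψ - (star φ ⬝ᵥ ψ) • φ
  have hφx : star φ ⬝ᵥ x = 0 := by
    simp only [x, dotProduct_sub, dotProduct_smul, hφ, smul_eq_mul, mul_one, sub_self]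
  have hxx : star x ⬝ᵥ x = 0 := by
    have hstar : star x = star ψ - star (star φ ⬝ᵥ ψ) • star φ := by
      simp only [x, star_sub, star_smul]
    rw [hstar, sub_dotProduct, smul_dotProduct, h x hφx, hφx, smul_zero, sub_zero]
  exact sub_eq_zero.mp (dotProduct_star_self_eq_zero.mp hxx)

theorem IsPureState.eq_of_sum_smul_eq {ρ : Matrix ι ι ℂ} (hρ : IsPureState ρ) {n : ℕ}
    {p : Fin (n + 1) → ℝ} {π : Fin (n + 1) → Matrix ι ι ℂ} (hp : ∀ i, 0 < p i)
    (hπ : ∀ i, IsPureState (π i)) (hsum : (∑ i, (p i : ℂ) • π i) = ρ) (i : Fin (n + 1)) :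
    π i = ρ := by
  obtain ⟨φ, hφ, rfl⟩ := hρ
  choose ψ hψ hπψ using hπ
  simp only [hπψ] at hsum ⊢
  set c := star φ ⬝ᵥ ψ i
  have hψc : ψ i = c • φ := eq_dotProduct_smul_of_forall_orthogonal hφ fun x hx =>
    dotProduct_eq_zero_of_sum_smul_eq hp hsum hx i
  have hc : c * star c = 1 := by
    have := hψ i
    rw [hψc, star_smul, smul_dotProduct, dotProduct_smul, hφ] at this
    simpa [mul_comm] using this
  rw [hψc, star_smul, smul_vecMulVec, vecMulVec_smul, smul_smul, hc, one_smul]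

theorem IsPureState.pureEnt_nonneg {κ : Type} [Fintype κ] [DecidableEq ι]
    {π : Matrix (ι × κ) (ι × κ) ℂ} (h : IsPureState π) : 0 ≤ pureEnt π :=
  h.isState.trRight.entropy_nonneg

theorem IsPureState.decompositionValues_eq {R : Matrix ι ι ℂ} (hR : IsPureState R)
    {F : (n : ℕ) → (Fin (n + 1) → ℝ) → (Fin (n + 1) → Matrix ι ι ℂ) → ℝ} {v : ℝ}
    (hF : ∀ n p, (∀ i, 0 < p i) → ∑ i, p i = 1 → F n p (fun _ => R) = v) :
    decompositionValues R F = {v} := by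
  ext e
  constructor
  · rintro ⟨n, p, π, hp, hπ, hsum, rfl⟩
    obtain rfl : π = fun _ => R := funext (hR.eq_of_sum_smul_eq hp hπ hsum)
    exact hF n p hp (sum_weights_eq_one hπ hsum hR.isState.2)
  · rintro rfl
    exact ⟨0, fun _ => 1, fun _ => R, fun _ => one_pos, fun _ => hR, by simp,
      (hF 0 _ (fun _ => one_pos) (by simp)).symm⟩

variable {κ : Type} [Fintype κ] [DecidableEq ι]

theorem IsPureState.Em_eq {R : Matrix (ι × κ) (ι × κ) ℂ} (hR : IsPureState R) :
    Em R = pureEnt R := by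
  change sInf (decompositionValues R _) = _
  rw [hR.decompositionValues_eq fun _ _ _ _ => Finset.inf'_const _ _, csInf_singleton]

theorem IsPureState.Ef_eq {R : Matrix (ι × κ) (ι × κ) ℂ} (hR : IsPureState R) :
    Ef R = pureEnt R := by
  change sInf (decompositionValues R _) = _
  rw [hR.decompositionValues_eq fun _ p _ hp1 => by rw [← Finset.sum_mul, hp1, one_mul],
    csInf_singleton]

theorem Em_le_Ef {ρ : Matrix (ι × κ) (ι × κ) ℂ} (htr : ρ.trace = 1) : Em ρ ≤ Ef ρ := by
  refine sInf_decompositionValues_le_sInf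
    (fun _ _ _ _ hπ _ => Finset.le_inf' _ _ fun i _ => (hπ i).pureEnt_nonneg) ?_
  intro n p π hp hπ hρ
  calc Finset.univ.inf' Finset.univ_nonempty (fun i => pureEnt (π i))
      = ∑ i, p i * Finset.univ.inf' Finset.univ_nonempty (fun i => pureEnt (π i)) := by
        rw [← Finset.sum_mul, sum_weights_eq_one hπ hρ htr, one_mul]
    _ ≤ ∑ i, p i * pureEnt (π i) := Finset.sum_le_sum fun i _ =>
        mul_le_mul_of_nonneg_left (Finset.inf'_le _ (Finset.mem_univ i)) (hp i).le

end Entanglement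

/-- (v) ⟹ (i): strong superadditivity of `E_f` (for all spaces and states)
implies strong superadditivity of `E_m` for pure states. -/
theorem Ef_strong_superadditive_implies_Em_strong_superadditive_pure
    (hEf : ∀ (a b a' b' : Type) [Fintype a] [Fintype b] [Fintype a'] [Fintype b']
      [DecidableEq a] [DecidableEq b] [DecidableEq a'] [DecidableEq b'],
      ∀ σ : Matrix ((a × b) × (a' × b')) ((a × b) × (a' × b')) ℂ,
        IsState σ →
        Ef (reorder σ) ≥ Ef (trRight σ) + Ef (trLeft σ))
    {a b a' b' : Type} [Fintype a] [Fintype b] [Fintype a'] [Fintype b']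
    [DecidableEq a] [DecidableEq b] [DecidableEq a'] [DecidableEq b']
    (ρ : Matrix ((a × b) × (a' × b')) ((a × b) × (a' × b')) ℂ)
    (hρ : IsPureState ρ) :
    Em (reorder ρ) ≥ Em (trRight ρ) + Em (trLeft ρ) := by
  have hState := hρ.isState
  have hReorder : IsPureState (reorder ρ) := hρ.reindex _
  have hEm_eq_Ef : Em (reorder ρ) = Ef (reorder ρ) := by rw [hReorder.Em_eq, hReorder.Ef_eq]
  have hRight : Em (trRight ρ) ≤ Ef (trRight ρ) := Em_le_Ef hState.trRight.2
  have hLeft : Em (trLeft ρ) ≤ Ef (trLeft ρ) := Em_le_Ef (by rw [trace_trLeft, hState.2])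
  have hSuper := hEf a b a' b' ρ hState
  linarith

end QAdditivity
end
end

section
/- For every state ρ on a tensor product H₁ ⊗ H₂ of finite-dimensional complex Hilbert spaces, E_m(ρ) equals the minimum of E(|φ⟩⟨φ|) over all unit vectors φ lying in the range (support) of ρ. -/
open Matrix Kronecker BigOperators ComplexOrder

noncomputable section

namespace QAdditivity

/-!
A vector `φ` lies in the support of a positive semidefinite `ρ` exactly when `c |φ⟩⟨φ| ≤ ρ`
for some `c > 0`: one direction because the range of a Hermitian matrix is the orthogonal
complement of its kernel, the other by Cauchy–Schwarz after writing `ρ = B⋆B`. Hence every pure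
state of an ensemble for `ρ` is spanned by a vector of the support, and conversely every unit
vector `φ` of the support heads an ensemble for `ρ`, obtained by splitting the positive remainder
`ρ - c |φ⟩⟨φ|` into pure states. So every element of either set whose infimum is taken is bounded
below by an element of the other.
-/

section

variable {n : Type} [Fintype n]

theorem star_dotProduct_vecMulVec_mulVec (φ x : n → ℂ) :
    star x ⬝ᵥ (vecMulVec φ (star φ) *ᵥ x) = Complex.normSq (star φ ⬝ᵥ x) := by
  rw [vecMulVec_mulVec, dotProduct_smul, op_smul_eq_mul, star_dotProduct, Complex.star_def,
    Complex.normSq_eq_conj_mul_self]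

theorem normSq_star_dotProduct_le (u v : n → ℂ) :
    Complex.normSq (star u ⬝ᵥ v) ≤ (star u ⬝ᵥ u).re * (star v ⬝ᵥ v).re := by
  have h := inner_mul_inner_self_le (𝕜 := ℂ) (WithLp.toLp 2 u) (WithLp.toLp 2 v)
  simp only [EuclideanSpace.inner_eq_star_dotProduct] at h
  rw [Complex.normSq_eq_norm_sq, sq]
  convert h using 2
  · rw [dotProduct_comm]
  · rw [star_dotProduct, norm_star, dotProduct_comm]
  · rw [dotProduct_comm]; rfl
  · rw [dotProduct_comm]; rfl

theorem posSemidef_sub_smul_vecMulVec_iff {A : Matrix n n ℂ} (hA : A.IsHermitian) (c : ℝ)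
    (φ : n → ℂ) :
    (A - (c : ℂ) • vecMulVec φ (star φ)).PosSemidef ↔
      ∀ x, c * Complex.normSq (star φ ⬝ᵥ x) ≤ (star x ⬝ᵥ (A *ᵥ x)).re := by
  have hherm : (A - (c : ℂ) • vecMulVec φ (star φ)).IsHermitian :=
    hA.sub ((posSemidef_vecMulVec_self_star φ).1.smul (Complex.conj_ofReal c))
  have him (x : n → ℂ) : (star x ⬝ᵥ (A *ᵥ x)).im = 0 := hA.im_star_dotProduct_mulVec_self x
  rw [posSemidef_iff_dotProduct_mulVec, and_iff_right hherm]
  refine forall_congr' fun x => ?_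
  rw [sub_mulVec, dotProduct_sub, smul_mulVec, dotProduct_smul, star_dotProduct_vecMulVec_mulVec,
    smul_eq_mul, ← Complex.ofReal_mul, Complex.nonneg_iff]
  simp [him x]

theorem _root_.Matrix.IsHermitian.mem_supp_iff {A : Matrix n n ℂ} (hA : A.IsHermitian)
    {φ : n → ℂ} : φ ∈ supp A ↔ ∀ u, A *ᵥ u = 0 → star u ⬝ᵥ φ = 0 := by
  classical
  have hrange : LinearMap.range (toEuclideanLin A) = (LinearMap.ker (toEuclideanLin A))ᗮ := by
    rw [LinearMap.orthogonal_ker, ← toEuclideanLin_conjTranspose_eq_adjoint, hA.eq]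
  have h := congrArg (WithLp.toLp 2 φ ∈ ·) hrange
  simp only [LinearMap.mem_range, Submodule.mem_orthogonal, LinearMap.mem_ker,
    EuclideanSpace.inner_eq_star_dotProduct, eq_iff_iff, (WithLp.toLp_surjective 2).exists,
    (WithLp.toLp_surjective 2).forall, toLpLin_toLp, toLin'_apply,
    (WithLp.toLp_injective 2).eq_iff] at h
  simpa [supp, dotProduct_comm φ] using h

theorem mem_supp_of_posSemidef_sub_smul_vecMulVec {ρ : Matrix n n ℂ} (hρ : ρ.IsHermitian)
    {c : ℝ} (hc : 0 < c) {φ : n → ℂ} (h : (ρ - (c : ℂ) • vecMulVec φ (star φ)).PosSemidef) :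
    φ ∈ supp ρ := by
  refine hρ.mem_supp_iff.2 fun u hu => ?_
  have hle := (posSemidef_sub_smul_vecMulVec_iff hρ c φ).1 h u
  rw [hu, dotProduct_zero, Complex.zero_re] at hle
  have hφu : Complex.normSq (star φ ⬝ᵥ u) = 0 :=
    le_antisymm (nonpos_of_mul_nonpos_right hle hc) (Complex.normSq_nonneg _)
  rw [star_dotProduct, Complex.normSq_eq_zero.mp hφu, star_zero]

theorem exists_posSemidef_sub_smul_vecMulVec_of_mem_supp {ρ : Matrix n n ℂ}
    (hρ : ρ.PosSemidef) {φ : n → ℂ} (hφ : φ ∈ supp ρ) :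
    ∃ c : ℝ, 0 < c ∧ (ρ - (c : ℂ) • vecMulVec φ (star φ)).PosSemidef := by
  classical
  obtain ⟨y, rfl⟩ := hφ
  obtain ⟨B, rfl⟩ : ∃ B : Matrix n n ℂ, ρ = star B * B := by
    open scoped MatrixOrder in exact CStarAlgebra.nonneg_iff_eq_star_mul_self.mp hρ.nonneg
  -- `|⟪φ, x⟫|² = |⟪B y, B x⟫|² ≤ d ⟪x, ρ x⟫`; the `1 +` keeps `c` positive when `d = 0`.
  set d := (star (B *ᵥ y) ⬝ᵥ (B *ᵥ y)).re
  have hd : 0 ≤ d := (Complex.nonneg_iff.mp (dotProduct_star_self_nonneg _)).1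
  refine ⟨(1 + d)⁻¹, by positivity, (posSemidef_sub_smul_vecMulVec_iff hρ.1 _ _).2 fun x => ?_⟩
  have hφx : star ((star B * B) *ᵥ y) ⬝ᵥ x = star (B *ᵥ y) ⬝ᵥ (B *ᵥ x) := by
    rw [← mulVec_mulVec, star_mulVec, star_eq_conjTranspose, conjTranspose_conjTranspose,
      ← dotProduct_mulVec]
  have hquad : star x ⬝ᵥ ((star B * B) *ᵥ x) = star (B *ᵥ x) ⬝ᵥ (B *ᵥ x) := by
    rw [← mulVec_mulVec, dotProduct_mulVec, star_eq_conjTranspose, vecMul_conjTranspose,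
      star_star]
  have hq : 0 ≤ (star (B *ᵥ x) ⬝ᵥ (B *ᵥ x)).re :=
    (Complex.nonneg_iff.mp (dotProduct_star_self_nonneg _)).1
  rw [mulVecLin_apply, hφx, hquad]
  calc (1 + d)⁻¹ * Complex.normSq (star (B *ᵥ y) ⬝ᵥ (B *ᵥ x))
      ≤ (1 + d)⁻¹ * (d * (star (B *ᵥ x) ⬝ᵥ (B *ᵥ x)).re) := by
        gcongr; exact normSq_star_dotProduct_le _ _
    _ ≤ (star (B *ᵥ x) ⬝ᵥ (B *ᵥ x)).re := by
        rw [← mul_assoc]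
        exact mul_le_of_le_one_left hq (by rw [inv_mul_le_iff₀ (by positivity)]; linarith)

theorem mem_supp_iff_exists_posSemidef_sub_smul_vecMulVec {ρ : Matrix n n ℂ}
    (hρ : ρ.PosSemidef) {φ : n → ℂ} :
    φ ∈ supp ρ ↔ ∃ c : ℝ, 0 < c ∧ (ρ - (c : ℂ) • vecMulVec φ (star φ)).PosSemidef :=
  ⟨exists_posSemidef_sub_smul_vecMulVec_of_mem_supp hρ,
    fun ⟨_, hc, h⟩ => mem_supp_of_posSemidef_sub_smul_vecMulVec hρ.1 hc h⟩

def IsPureEnsemble {ι' : Type} [Fintype ι'] (p : ι' → ℝ) (π : ι' → Matrix n n ℂ)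
    (ρ : Matrix n n ℂ) : Prop :=
  (∀ i, 0 < p i) ∧ (∀ i, IsPureState (π i)) ∧ ∑ i, (p i : ℂ) • π i = ρ

theorem IsPureState.posSemidef {π : Matrix n n ℂ} (h : IsPureState π) : π.PosSemidef := by
  obtain ⟨φ, -, rfl⟩ := h
  exact posSemidef_vecMulVec_self_star φ

theorem IsPureEnsemble.mem_supp {ι' : Type} [Fintype ι'] {p : ι' → ℝ}
    {π : ι' → Matrix n n ℂ} {ρ : Matrix n n ℂ} (h : IsPureEnsemble p π ρ) {j : ι'}
    {φ : n → ℂ} (hj : π j = vecMulVec φ (star φ)) : φ ∈ supp ρ := by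
  classical
  obtain ⟨hp, hπ, rfl⟩ := h
  have hterm (i : ι') : ((p i : ℂ) • π i).PosSemidef :=
    (hπ i).posSemidef.smul (Complex.zero_le_real.mpr (hp i).le)
  refine (mem_supp_iff_exists_posSemidef_sub_smul_vecMulVec
    (posSemidef_sum _ fun i _ => hterm i)).2 ⟨p j, hp j, ?_⟩
  rw [← hj, ← Finset.add_sum_erase _ _ (Finset.mem_univ j), add_sub_cancel_left]
  exact posSemidef_sum _ fun i _ => hterm i

theorem exists_pos_isPureState_inv_smul_vecMulVec {v : n → ℂ} (hv : v ≠ 0) :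
    ∃ r : ℝ, 0 < r ∧ IsPureState ((r : ℂ)⁻¹ • vecMulVec v (star v)) := by
  set r := (star v ⬝ᵥ v).re
  have hvv : star v ⬝ᵥ v = r := Complex.eq_re_of_ofReal_le (r := 0)
    (by rw [Complex.ofReal_zero]; exact dotProduct_star_self_nonneg v)
  have hr : 0 < r := by
    refine lt_of_le_of_ne (Complex.nonneg_iff.mp (dotProduct_star_self_nonneg v)).1 fun h => hv ?_
    rw [← dotProduct_star_self_eq_zero, hvv, ← h, Complex.ofReal_zero]
  have hs : (√r)⁻¹ * (√r)⁻¹ = r⁻¹ := by rw [← mul_inv, Real.mul_self_sqrt hr.le]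
  refine ⟨r, hr, (√r)⁻¹ • v, ?_, ?_⟩
  · simp only [star_smul, star_trivial, smul_dotProduct, dotProduct_smul, hvv, smul_smul, hs]
    rw [Complex.real_smul, ← Complex.ofReal_mul, inv_mul_cancel₀ hr.ne', Complex.ofReal_one]
  · simp only [star_smul, star_trivial, smul_vecMulVec, vecMulVec_smul, smul_smul, hs]
    rw [← Complex.ofReal_inv, Complex.coe_smul]

theorem _root_.Matrix.PosSemidef.exists_isPureEnsemble {τ : Matrix n n ℂ} (hτ : τ.PosSemidef) :
    ∃ (m : ℕ) (q : Fin m → ℝ) (π : Fin m → Matrix n n ℂ), IsPureEnsemble q π τ := by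
  classical
  obtain ⟨m, v, rfl⟩ := posSemidef_iff_eq_sum_vecMulVec.1 hτ
  let P (i : Fin m) := vecMulVec (v i) (star (v i))
  have hnorm (i : {i // P i ≠ 0}) :
      ∃ r : ℝ, 0 < r ∧ IsPureState ((r : ℂ)⁻¹ • P i) :=
    exists_pos_isPureState_inv_smul_vecMulVec fun hv => i.2 (by simp [P, hv])
  choose r hr hpure using hnorm
  let e := (Fintype.equivFin {i // P i ≠ 0}).symm
  refine ⟨_, r ∘ e, fun k => (r (e k) : ℂ)⁻¹ • P (e k), fun k => hr _, fun k => hpure _, ?_⟩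
  calc ∑ k, (r (e k) : ℂ) • (r (e k) : ℂ)⁻¹ • P (e k) = ∑ k, P (e k) := by
        refine Finset.sum_congr rfl fun k _ => ?_
        rw [smul_smul, mul_inv_cancel₀ (Complex.ofReal_ne_zero.mpr (hr _).ne'), one_smul]
    _ = ∑ i : {i // P i ≠ 0}, P i := e.sum_comp (fun i => P i)
    _ = ∑ i, P i :=
        (Finset.sum_subtype _ (fun i => by simp) P).symm.trans (Finset.sum_filter_ne_zero _)

theorem exists_isPureEnsemble_of_mem_supp {ρ : Matrix n n ℂ} (hρ : ρ.PosSemidef)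
    {φ : n → ℂ} (hφ : φ ∈ supp ρ) (hφ1 : star φ ⬝ᵥ φ = 1) :
    ∃ (m : ℕ) (p : Fin (m + 1) → ℝ) (π : Fin (m + 1) → Matrix n n ℂ),
      IsPureEnsemble p π ρ ∧ π 0 = vecMulVec φ (star φ) := by
  obtain ⟨c, hc, hτ⟩ := (mem_supp_iff_exists_posSemidef_sub_smul_vecMulVec hρ).1 hφ
  obtain ⟨m, q, π, hq, hπ, hsum⟩ := hτ.exists_isPureEnsemble
  refine ⟨m, Fin.cons c q, Fin.cons (vecMulVec φ (star φ)) π,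
    ⟨Fin.cases hc hq, Fin.cases ⟨φ, hφ1, rfl⟩ hπ, ?_⟩, rfl⟩
  simp only [Fin.sum_univ_succ, Fin.cons_zero, Fin.cons_succ, hsum, add_sub_cancel]

end

theorem Em_eq_min_over_support_general
    {ι κ : Type} [Fintype ι] [Fintype κ] [DecidableEq ι]
    (ρ : Matrix (ι × κ) (ι × κ) ℂ) (hρ : IsState ρ) :
    Em ρ = sInf { e : ℝ | ∃ φ : ι × κ → ℂ,
      star φ ⬝ᵥ φ = 1 ∧ φ ∈ supp ρ ∧ e = pureEnt (vecMulVec φ (star φ)) } := by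
  refine csInf_eq_csInf_of_forall_exists_le ?_ ?_
  · rintro _ ⟨n, p, π, hp, hπ, hsum, rfl⟩
    obtain ⟨i, -, hi⟩ := Finset.exists_mem_eq_inf' Finset.univ_nonempty fun i => pureEnt (π i)
    obtain ⟨φ, hφ1, hπi⟩ := hπ i
    exact ⟨_, ⟨φ, hφ1, IsPureEnsemble.mem_supp ⟨hp, hπ, hsum⟩ hπi, rfl⟩, by rw [hi, hπi]⟩
  · rintro _ ⟨φ, hφ1, hφ, rfl⟩
    obtain ⟨m, p, π, ⟨hp, hπ, hsum⟩, hπ0⟩ := exists_isPureEnsemble_of_mem_supp hρ.1 hφ hφ1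
    exact ⟨_, ⟨m, p, π, hp, hπ, hsum, rfl⟩, hπ0 ▸ Finset.inf'_le _ (Finset.mem_univ 0)⟩

/-- `E_m(ρ)` equals the minimal entanglement of a unit vector in the support of
`ρ`. -/
theorem Em_eq_min_over_support
    {ι κ : Type} [Fintype ι] [Fintype κ] [DecidableEq ι] [DecidableEq κ]
    (ρ : Matrix (ι × κ) (ι × κ) ℂ) (hρ : IsState ρ) :
    Em ρ = sInf { e : ℝ | ∃ φ : ι × κ → ℂ,
      star φ ⬝ᵥ φ = 1 ∧ φ ∈ supp ρ ∧ e = pureEnt (vecMulVec φ (star φ)) } :=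
  Em_eq_min_over_support_general ρ hρ

end QAdditivity
end
end

section
/- Let ρ and π be positive semidefinite operators on H ⊗ H' (finite-dimensional complex Hilbert spaces). If the support (range) of π is contained in the support of ρ, then the support of tr_{H'} π is contained in the support of tr_{H'} ρ. -/
/-!
For Hermitian operators, `supp B ≤ supp A` is equivalent to `ker A ≤ ker B`, since supports are
the orthogonal complements of kernels. For `ρ ≥ 0` we have
`⟪x, (tr_{H'} ρ) x⟫ = ∑ₖ ⟪x ⊗ eₖ, ρ (x ⊗ eₖ)⟫`, a sum of nonnegative terms, so
`x ∈ ker (tr_{H'} ρ)` iff `x ⊗ eₖ ∈ ker ρ` for every `k`. Hence `ker ρ ≤ ker π` passes to the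
partial traces.
-/

open Matrix Kronecker BigOperators ComplexOrder

noncomputable section

namespace QAdditivity

theorem _root_.LinearMap.IsSymmetric.range_le_range_iff_ker_le_ker {𝕜 E : Type*} [RCLike 𝕜]
    [NormedAddCommGroup E] [InnerProductSpace 𝕜 E] [FiniteDimensional 𝕜 E]
    {S T : E →ₗ[𝕜] E} (hS : S.IsSymmetric) (hT : T.IsSymmetric) :
    LinearMap.range S ≤ LinearMap.range T ↔ LinearMap.ker T ≤ LinearMap.ker S := by
  rw [← hS.orthogonal_range, ← hT.orthogonal_range, Submodule.orthogonal_le_orthogonal_iff]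

section toEuclideanLin

variable {𝕜 ι : Type*} [RCLike 𝕜] [Fintype ι] [DecidableEq ι]

theorem _root_.Matrix.toEuclideanLin_eq_comp (A : Matrix ι ι 𝕜) :
    toEuclideanLin A = (WithLp.linearEquiv 2 𝕜 (ι → 𝕜)).symm.toLinearMap ∘ₗ A.mulVecLin ∘ₗ
      (WithLp.linearEquiv 2 𝕜 (ι → 𝕜)).toLinearMap :=
  rfl

theorem _root_.Matrix.range_toEuclideanLin (A : Matrix ι ι 𝕜) :
    LinearMap.range (toEuclideanLin A) =
      (LinearMap.range A.mulVecLin).map (WithLp.linearEquiv 2 𝕜 (ι → 𝕜)).symm.toLinearMap := by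
  rw [toEuclideanLin_eq_comp, LinearMap.range_comp,
    LinearMap.range_comp_of_range_eq_top _ (LinearEquiv.range _)]

theorem _root_.Matrix.ker_toEuclideanLin (A : Matrix ι ι 𝕜) :
    LinearMap.ker (toEuclideanLin A) =
      (LinearMap.ker A.mulVecLin).map (WithLp.linearEquiv 2 𝕜 (ι → 𝕜)).symm.toLinearMap := by
  rw [toEuclideanLin_eq_comp, LinearEquiv.ker_comp, LinearMap.ker_comp,
    Submodule.comap_equiv_eq_map_symm]

theorem _root_.Matrix.IsHermitian.range_mulVecLin_le_iff_ker_le_ker {A B : Matrix ι ι 𝕜}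
    (hA : A.IsHermitian) (hB : B.IsHermitian) :
    LinearMap.range B.mulVecLin ≤ LinearMap.range A.mulVecLin ↔
      LinearMap.ker A.mulVecLin ≤ LinearMap.ker B.mulVecLin := by
  have key := (isSymmetric_toEuclideanLin_iff.mpr hB).range_le_range_iff_ker_le_ker
    (isSymmetric_toEuclideanLin_iff.mpr hA)
  rwa [range_toEuclideanLin, range_toEuclideanLin, ker_toEuclideanLin, ker_toEuclideanLin,
    Submodule.map_le_map_iff_of_injective (LinearEquiv.injective _),
    Submodule.map_le_map_iff_of_injective (LinearEquiv.injective _)] at key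

end toEuclideanLin

theorem _root_.Matrix.IsHermitian.trRight {ι ι' : Type} [Fintype ι] [Fintype ι']
    {M : Matrix (ι × ι') (ι × ι') ℂ} (hM : M.IsHermitian) : (trRight M).IsHermitian := by
  ext i j
  simp only [conjTranspose_apply, QAdditivity.trRight, of_apply, star_sum]
  exact Finset.sum_congr rfl fun k _ => hM.apply (i, k) (j, k)

section trRight

variable {ι ι' : Type} [Fintype ι] [Fintype ι'] [DecidableEq ι']

/-- The product vector `x ⊗ eₖ`. -/
def tensorSingle (x : ι → ℂ) (k : ι') : ι × ι' → ℂ :=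
  fun p => if p.2 = k then x p.1 else 0

theorem trRight_mulVec_apply (M : Matrix (ι × ι') (ι × ι') ℂ) (x : ι → ℂ) (i : ι) :
    (trRight M *ᵥ x) i = ∑ k, (M *ᵥ tensorSingle x k) (i, k) := by
  simp only [mulVec, dotProduct, trRight, tensorSingle, of_apply, Fintype.sum_prod_type,
    mul_ite, mul_zero, Finset.sum_ite_eq', Finset.mem_univ, if_true, Finset.sum_mul]
  exact Finset.sum_comm

theorem dotProduct_trRight_mulVec (M : Matrix (ι × ι') (ι × ι') ℂ) (x : ι → ℂ) :
    star x ⬝ᵥ (trRight M *ᵥ x) =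
      ∑ k, star (tensorSingle x k) ⬝ᵥ (M *ᵥ tensorSingle x k) := by
  simp only [dotProduct, Pi.star_apply, trRight_mulVec_apply, Finset.mul_sum,
    Fintype.sum_prod_type, tensorSingle, apply_ite (star : ℂ → ℂ), star_zero, ite_mul, zero_mul,
    Finset.sum_ite_eq', Finset.mem_univ, if_true]
  exact Finset.sum_comm

theorem _root_.Matrix.PosSemidef.trRight_mulVec_eq_zero_iff {M : Matrix (ι × ι') (ι × ι') ℂ}
    (hM : M.PosSemidef) (x : ι → ℂ) :
    trRight M *ᵥ x = 0 ↔ ∀ k, M *ᵥ tensorSingle x k = 0 := by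
  refine ⟨fun hx k => ?_, fun h => funext fun i => ?_⟩
  · have hsum : ∑ k, star (tensorSingle x k) ⬝ᵥ (M *ᵥ tensorSingle x k) = 0 := by
      rw [← dotProduct_trRight_mulVec, hx, dotProduct_zero]
    rw [← hM.dotProduct_mulVec_zero_iff]
    exact (Finset.sum_eq_zero_iff_of_nonneg fun k _ => hM.dotProduct_mulVec_nonneg _).mp hsum k
      (Finset.mem_univ k)
  · simp [trRight_mulVec_apply, h]

end trRight

/-- If the support of the positive semidefinite operator `π` is contained in
that of `ρ`, the same holds after taking partial traces over `H'`. -/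
theorem supp_trRight_mono
    {ι ι' : Type} [Fintype ι] [Fintype ι']
    (ρ π : Matrix (ι × ι') (ι × ι') ℂ)
    (hρ : ρ.PosSemidef) (hπ : π.PosSemidef)
    (h : supp π ≤ supp ρ) :
    supp (trRight π) ≤ supp (trRight ρ) := by
  classical
  have hker := (hρ.isHermitian.range_mulVecLin_le_iff_ker_le_ker hπ.isHermitian).mp h
  refine (hρ.isHermitian.trRight.range_mulVecLin_le_iff_ker_le_ker hπ.isHermitian.trRight).mpr
    fun x hx => ?_
  have hρx := (hρ.trRight_mulVec_eq_zero_iff x).mp hx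
  exact (hπ.trRight_mulVec_eq_zero_iff x).mpr fun k => hker (hρx k)

end QAdditivity
end
end
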